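/- arXiv:2102.04546 — 5 statements merged into one kernel-verified Lean document; each statement's English description precedes it below -/
import Mathlib

section
/- Fix integers 0 ≤ s ≤ n and let S be a uniformly random s-element subset of [n] (i.e., S is distributed uniformly over all subsets of [n] of cardinality s). Define the indicator random variables X_i = 1{i ∈ S} for i ∈ [n]. Then X_1, …, X_n are negatively associated. -/
open MeasureTheory

/-- Random variables `X 1, …, X n` on a common probability space are *negatively associated*
if for all disjoint subsets `I, J ⊆ [n]` and all coordinatewise non-decreasing functions
`f : ℝ^I → ℝ` and `g : ℝ^J → ℝ`,
`E[f(X i, i ∈ I) · g(X j, j ∈ J)] ≤ E[f(X i, i ∈ I)] · E[g(X j, j ∈ J)]`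
(whenever these expectations exist). -/
def NegativelyAssociated {Ω : Type*} [MeasurableSpace Ω] (μ : Measure Ω) {n : ℕ}
    (X : Fin n → Ω → ℝ) : Prop :=
  ∀ (I J : Finset (Fin n)), Disjoint I J →
    ∀ (f : (I → ℝ) → ℝ) (g : (J → ℝ) → ℝ), Monotone f → Monotone g →
      Integrable (fun ω => f (fun i => X i ω)) μ →
      Integrable (fun ω => g (fun j => X j ω)) μ →
      Integrable (fun ω => f (fun i => X i ω) * g (fun j => X j ω)) μ →
      ∫ ω, f (fun i => X i ω) * g (fun j => X j ω) ∂μ ≤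
        (∫ ω, f (fun i => X i ω) ∂μ) * ∫ ω, g (fun j => X j ω) ∂μ

/-- The sample space of `s`-element subsets of `[n] = Fin n`. -/
abbrev SubsetsOfCard (n s : ℕ) : Type := {A : Finset (Fin n) // A.card = s}

instance (n s : ℕ) : MeasurableSpace (SubsetsOfCard n s) := ⊤

/-- The uniform probability measure on the `s`-element subsets of `[n]`. -/
noncomputable def uniformSubsetMeasure (n s : ℕ) : Measure (SubsetsOfCard n s) :=
  (Fintype.card (SubsetsOfCard n s) : ENNReal)⁻¹ • Measure.count

/-!
Induction on `s`, for arbitrary monotone `F`, `G` depending only on `S ∩ I`, resp. `S ∩ J`,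
averaged over the `s`-subsets of a finite set `V`. Let `A k`, `B k` be the sums of `F`, `G`
over the `s`-subsets containing `k`. The induction hypothesis, applied to `F (insert k ·)` and
`G (insert k ·)` on `V \ {k}`, says that on the subsets containing `k` the average of `F * G`
is at most the product of the averages of `F` and `G`.
Swapping `k` with a point `k₀ ∉ I` shows that `A` attains its minimum at every point outside
`I`, and likewise for `B` outside `J`; as `I` and `J` are disjoint, `A` and `B` antivary, so
Chebyshev's sum inequality gives `#V * ∑ k, A k * B k ≤ (∑ k, A k) * ∑ k, B k`. Double
counting (`∑ k, A k = s * ∑ F`) closes the induction.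
-/

open Finset

section

variable {α : Type*} [DecidableEq α]

theorem inter_subset_map_swap {S I : Finset α} {k k₀ : α} (hk₀S : k₀ ∈ S) (hk₀I : k₀ ∉ I) :
    S ∩ I ⊆ S.map (Equiv.swap k k₀).toEmbedding := by
  intro x hx
  rw [mem_map_equiv, Equiv.symm_swap]
  rw [mem_inter] at hx
  rcases eq_or_ne x k with rfl | hxk
  · rwa [Equiv.swap_apply_left]
  · rw [Equiv.swap_apply_of_ne_of_ne hxk (ne_of_mem_of_not_mem hx.2 hk₀I)]
    exact hx.1

theorem map_swap_map_swap (S : Finset α) (k k₀ : α) :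
    (S.map (Equiv.swap k k₀).toEmbedding).map (Equiv.swap k k₀).toEmbedding = S := by
  ext; simp [mem_map_equiv]

theorem sum_filter_mem_powersetCard_swap {M : Type*} [AddCommMonoid M] {V : Finset α} {k k₀ : α}
    (hk : k ∈ V) (hk₀ : k₀ ∈ V) (s : ℕ) (H : Finset α → M) :
    ∑ S ∈ V.powersetCard s with k ∈ S, H S =
      ∑ S ∈ V.powersetCard s with k₀ ∈ S, H (S.map (Equiv.swap k k₀).toEmbedding) := by
  set σ := Equiv.swap k k₀
  have hσV : V.map σ.toEmbedding = V := map_perm fun x hx => by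
    by_contra hxV
    exact hx (Equiv.swap_apply_of_ne_of_ne (ne_of_mem_of_not_mem hk hxV).symm
      (ne_of_mem_of_not_mem hk₀ hxV).symm)
  symm
  refine sum_nbij' (·.map σ.toEmbedding) (·.map σ.toEmbedding) (fun S hS => ?_) (fun S hS => ?_)
    (fun S _ => map_swap_map_swap S k k₀) (fun S _ => map_swap_map_swap S k k₀) (fun S _ => rfl)
  all_goals
    rw [mem_filter, mem_powersetCard] at hS ⊢
    refine ⟨⟨hσV ▸ map_subset_map.mpr hS.1.1, (card_map _).trans hS.1.2⟩, ?_⟩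
    simpa [mem_map_equiv, σ] using hS.2

theorem sum_filter_mem_powersetCard_succ {M : Type*} [AddCommMonoid M] {V : Finset α} {k : α}
    (hk : k ∈ V) (s : ℕ) (H : Finset α → M) :
    ∑ S ∈ V.powersetCard (s + 1) with k ∈ S, H S =
      ∑ T ∈ (V.erase k).powersetCard s, H (insert k T) := by
  refine sum_nbij' (erase · k) (insert k) (fun S hS => ?_) (fun T hT => ?_) (fun S hS => ?_)
    (fun T hT => ?_) (fun S hS => ?_)
  · simp only [mem_filter, mem_powersetCard] at hS ⊢
    grind
  · simp only [mem_filter, mem_powersetCard] at hT ⊢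
    grind
  · exact insert_erase (mem_filter.mp hS).2
  · have : k ∉ T := fun h => by simpa using (mem_powersetCard.mp hT).1 h
    exact erase_insert this
  · rw [insert_erase (mem_filter.mp hS).2]

theorem sum_sum_filter_mem_powersetCard {M : Type*} [AddCommMonoid M] (V : Finset α) (s : ℕ)
    (H : Finset α → M) :
    ∑ k ∈ V, ∑ S ∈ V.powersetCard s with k ∈ S, H S = s • ∑ S ∈ V.powersetCard s, H S := by
  simp_rw [sum_filter]
  rw [sum_comm, smul_sum]
  refine sum_congr rfl fun S hS => ?_
  obtain ⟨hSV, rfl⟩ := mem_powersetCard.mp hS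
  rw [← sum_filter, filter_mem_eq_inter, inter_eq_right.mpr hSV, sum_const]

theorem apply_insert_eq_apply_insert_inter {β : Type*} {F : Finset α → β} {I : Finset α}
    (hFI : ∀ S, F S = F (S ∩ I)) (k : α) (S : Finset α) :
    F (insert k S) = F (insert k (S ∩ I)) := by
  rw [hFI, hFI (insert k (S ∩ I)), insert_inter_distrib, inter_assoc,
    inter_eq_right.mpr (subset_insert k I)]

theorem sum_filter_mem_powersetCard_le {β : Type*} [AddCommMonoid β] [PartialOrder β]
    [IsOrderedAddMonoid β] {F : Finset α → β} (hF : Monotone F) {I : Finset α}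
    (hFI : ∀ S, F S = F (S ∩ I)) {V : Finset α} {k k₀ : α} (hk : k ∈ V) (hk₀ : k₀ ∈ V)
    (hk₀I : k₀ ∉ I) (s : ℕ) :
    ∑ S ∈ V.powersetCard s with k₀ ∈ S, F S ≤ ∑ S ∈ V.powersetCard s with k ∈ S, F S := by
  rw [sum_filter_mem_powersetCard_swap hk hk₀]
  refine sum_le_sum fun S hS => ?_
  rw [hFI S]
  exact hF (inter_subset_map_swap (mem_filter.mp hS).2 hk₀I)

theorem antivaryOn_sum_filter_mem_powersetCard {β γ : Type*} [AddCommMonoid β] [PartialOrder β]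
    [IsOrderedAddMonoid β] [AddCommMonoid γ] [LinearOrder γ] [IsOrderedAddMonoid γ]
    {F : Finset α → β} {G : Finset α → γ} (hF : Monotone F) (hG : Monotone G) {I J : Finset α}
    (hIJ : Disjoint I J) (hFI : ∀ S, F S = F (S ∩ I)) (hGJ : ∀ S, G S = G (S ∩ J))
    (V : Finset α) (s : ℕ) :
    AntivaryOn (fun k => ∑ S ∈ V.powersetCard s with k ∈ S, F S)
      (fun k => ∑ S ∈ V.powersetCard s with k ∈ S, G S) V := by
  intro i hi j hj hlt
  have hjJ : j ∈ J := by
    by_contra hjJ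
    exact (sum_filter_mem_powersetCard_le hG hGJ hi hj hjJ s).not_gt hlt
  exact sum_filter_mem_powersetCard_le hF hFI hi hj (disjoint_right.mp hIJ hjJ) s

theorem choose_card_mul_sum_powersetCard_mul_le {F G : Finset α → ℝ} (hF : Monotone F)
    (hG : Monotone G) {I J : Finset α} (hIJ : Disjoint I J) (hFI : ∀ S, F S = F (S ∩ I))
    (hGJ : ∀ S, G S = G (S ∩ J)) (V : Finset α) (s : ℕ) :
    ((#V).choose s : ℝ) * ∑ S ∈ V.powersetCard s, F S * G S ≤
      (∑ S ∈ V.powersetCard s, F S) * ∑ S ∈ V.powersetCard s, G S := by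
  induction s generalizing V F G with
  | zero => simp
  | succ s ih =>
  set 𝒮 := V.powersetCard (s + 1)
  have hlink : ∀ k ∈ V, ((#V - 1).choose s : ℝ) * ∑ S ∈ 𝒮 with k ∈ S, F S * G S ≤
      (∑ S ∈ 𝒮 with k ∈ S, F S) * ∑ S ∈ 𝒮 with k ∈ S, G S := by
    intro k hk
    simp only [𝒮, sum_filter_mem_powersetCard_succ hk, ← card_erase_of_mem hk]
    exact ih (hF.comp fun _ _ h => insert_subset_insert k h)
      (hG.comp fun _ _ h => insert_subset_insert k h)
      (apply_insert_eq_apply_insert_inter hFI k) (apply_insert_eq_apply_insert_inter hGJ k) _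
  have hcount : ∀ H : Finset α → ℝ,
      ∑ k ∈ V, ∑ S ∈ 𝒮 with k ∈ S, H S = (s + 1) * ∑ S ∈ 𝒮, H S := by
    intro H
    rw [sum_sum_filter_mem_powersetCard, nsmul_eq_mul]
    push_cast; ring
  have hchoose : (#V : ℝ) * (#V - 1).choose s = (#V).choose (s + 1) * (s + 1) := by
    cases #V with
    | zero => simp
    | succ m => exact_mod_cast Nat.add_one_mul_choose_eq m s
  refine le_of_mul_le_mul_left ?_ (by positivity : (0 : ℝ) < (s + 1) ^ 2)
  calc ((s : ℝ) + 1) ^ 2 * ((#V).choose (s + 1) * ∑ S ∈ 𝒮, F S * G S)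
      = #V * ((#V - 1).choose s * ∑ k ∈ V, ∑ S ∈ 𝒮 with k ∈ S, F S * G S) := by
        rw [hcount]
        linear_combination (-((s : ℝ) + 1) * ∑ S ∈ 𝒮, F S * G S) * hchoose
    _ ≤ #V * ∑ k ∈ V, (∑ S ∈ 𝒮 with k ∈ S, F S) * ∑ S ∈ 𝒮 with k ∈ S, G S := by
        refine mul_le_mul_of_nonneg_left ?_ (Nat.cast_nonneg _)
        rw [mul_sum]
        exact sum_le_sum hlink
    _ ≤ (∑ k ∈ V, ∑ S ∈ 𝒮 with k ∈ S, F S) * ∑ k ∈ V, ∑ S ∈ 𝒮 with k ∈ S, G S :=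
        (antivaryOn_sum_filter_mem_powersetCard hF hG hIJ hFI hGJ V _).card_mul_sum_le_sum_mul_sum
    _ = ((s : ℝ) + 1) ^ 2 * ((∑ S ∈ 𝒮, F S) * ∑ S ∈ 𝒮, G S) := by
        rw [hcount, hcount]; ring

end

instance (n s : ℕ) : MeasurableSingletonClass (SubsetsOfCard n s) :=
  ⟨fun _ => MeasurableSpace.measurableSet_top⟩

theorem integral_uniformSubsetMeasure (n s : ℕ) (H : Finset (Fin n) → ℝ) :
    ∫ A, H A.1 ∂uniformSubsetMeasure n s =
      (n.choose s : ℝ)⁻¹ * ∑ S ∈ (univ : Finset (Fin n)).powersetCard s, H S := by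
  rw [uniformSubsetMeasure, integral_smul_measure, integral_count, Fintype.card_finset_len,
    Fintype.card_fin, ← sum_subtype _ (fun _ => mem_powersetCard_univ) H]
  simp

theorem negativelyAssociated_uniform_subset_indicators_general (n s : ℕ) :
    NegativelyAssociated (uniformSubsetMeasure n s)
      (fun (i : Fin n) (S : SubsetsOfCard n s) => if i ∈ S.1 then (1 : ℝ) else 0) := by
  intro I J hIJ f g hf hg _ _ _
  have hX : Monotone fun (S : Finset (Fin n)) (i : Fin n) => if i ∈ S then (1 : ℝ) else 0 :=
    fun S T hST i => by grind
  set F := fun S : Finset (Fin n) => f fun i : I => if ↑i ∈ S then (1 : ℝ) else 0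
  set G := fun S : Finset (Fin n) => g fun j : J => if ↑j ∈ S then (1 : ℝ) else 0
  have key := choose_card_mul_sum_powersetCard_mul_le (F := F) (G := G)
    (fun S T h => hf fun i => hX h i) (fun S T h => hg fun j => hX h j) hIJ
    (fun S => by simp [F]) (fun S => by simp [G]) univ s
  rw [card_univ, Fintype.card_fin] at key
  rw [integral_uniformSubsetMeasure n s (fun S => F S * G S), integral_uniformSubsetMeasure n s F,
    integral_uniformSubsetMeasure n s G]
  set c := (n.choose s : ℝ)
  -- `c = 0` when `s > n`; then `c⁻¹ = 0` and both sides vanish.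
  calc c⁻¹ * ∑ S ∈ univ.powersetCard s, F S * G S
      = c⁻¹ * c⁻¹ * (c * ∑ S ∈ univ.powersetCard s, F S * G S) := by
        linear_combination (-∑ S ∈ univ.powersetCard s, F S * G S) *
          (by simpa using mul_inv_mul_cancel c⁻¹ : c⁻¹ * c * c⁻¹ = c⁻¹)
    _ ≤ c⁻¹ * c⁻¹ * ((∑ S ∈ univ.powersetCard s, F S) * ∑ S ∈ univ.powersetCard s, G S) := by
        gcongr
    _ = _ := by ring

/-- If `S` is a uniformly random `s`-element subset of `[n]` (with `0 ≤ s ≤ n`), then the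
indicator random variables `X i = 1{i ∈ S}`, for `i ∈ [n]`, are negatively associated. -/
theorem negativelyAssociated_uniform_subset_indicators (n s : ℕ) (hs : s ≤ n) :
    NegativelyAssociated (uniformSubsetMeasure n s)
      (fun (i : Fin n) (S : SubsetsOfCard n s) => if i ∈ S.1 then (1 : ℝ) else 0) :=
  negativelyAssociated_uniform_subset_indicators_general n s
end

section
/- Let U be a finite set of size k ≥ 1, let T ⊆ U, let 1 ≤ s ≤ k, and let 0 < α < 1. If S is a uniformly random s-element subset of U, then Pr[ |S ∩ T| ∉ [(1−α)·s·|T|/k, (1+α)·s·|T|/k] ] ≤ 2·exp(−α²·s·|T|/(3k)). -/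
open Finset Real

/-!
Write `X = |S ∩ T|`, `t = |T|` and `p = s / k`. Double counting gives the factorial moments
`E[C(X, m)] = C(t, m) C(k - m, s - m) / C(k, s) ≤ C(t, m) p^m`, so for `θ ≥ 1` the binomial
expansion of `θ^X = (1 + (θ - 1))^X` yields `E[θ^X] ≤ (1 + (θ - 1) p)^t`: the hypergeometric
moment generating function is dominated by the binomial one. For `θ < 1` the same bound follows
by passing to the complement `Sᶜ`, a uniformly random `(k - s)`-subset. Markov's inequality for
`θ^X` with `θ = 1 + x`, `x = ±α`, then bounds each tail by `exp(-μ ((1 + x) log (1 + x) - x))`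
with `μ = s t / k`, and `(1 + x) log (1 + x) - x ≥ x² / 3` on `(-1, 1]`.
-/

theorem Nat.descFactorial_mul_pow_le_descFactorial_mul_pow {a b : ℕ} (hab : a ≤ b) (m : ℕ) :
    a.descFactorial m * b ^ m ≤ b.descFactorial m * a ^ m := by
  induction m with
  | zero => simp
  | succ m ih =>
    have hstep : (a - m) * b ≤ (b - m) * a := by
      rcases le_or_gt m a with h | h
      · zify [h, h.trans hab]; nlinarith
      · simp [Nat.sub_eq_zero_of_le h.le]
    rw [Nat.descFactorial_succ, Nat.descFactorial_succ, pow_succ, pow_succ]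
    calc (a - m) * a.descFactorial m * (b ^ m * b)
        = ((a - m) * b) * (a.descFactorial m * b ^ m) := by ring
      _ ≤ ((b - m) * a) * (b.descFactorial m * a ^ m) := Nat.mul_le_mul hstep ih
      _ = (b - m) * b.descFactorial m * (a ^ m * a) := by ring

theorem Nat.choose_mul_pow_le_choose_mul_pow {a b : ℕ} (hab : a ≤ b) (m : ℕ) :
    a.choose m * b ^ m ≤ b.choose m * a ^ m := by
  have h := Nat.descFactorial_mul_pow_le_descFactorial_mul_pow hab m
  rw [Nat.descFactorial_eq_factorial_mul_choose, Nat.descFactorial_eq_factorial_mul_choose,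
    mul_assoc, mul_assoc] at h
  exact Nat.le_of_mul_le_mul_left h (Nat.factorial_pos m)

theorem Nat.cast_choose_sub_sub_le {k s m : ℕ} (hms : m ≤ s) (hsk : s ≤ k) :
    ((k - m).choose (s - m) : ℝ) ≤ k.choose s * ((s : ℝ) / k) ^ m := by
  rcases k.eq_zero_or_pos with rfl | hk
  · obtain rfl : s = 0 := by omega
    obtain rfl : m = 0 := by omega
    simp
  have hkm : 0 < k.choose m := Nat.choose_pos (hms.trans hsk)
  have key : (k - m).choose (s - m) * k ^ m * k.choose m ≤ k.choose s * s ^ m * k.choose m :=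
    calc (k - m).choose (s - m) * k ^ m * k.choose m
        = (k.choose s * s.choose m) * k ^ m := by rw [Nat.choose_mul hms]; ring
      _ = k.choose s * (s.choose m * k ^ m) := by ring
      _ ≤ k.choose s * (k.choose m * s ^ m) :=
          Nat.mul_le_mul_left _ (Nat.choose_mul_pow_le_choose_mul_pow hsk m)
      _ = k.choose s * s ^ m * k.choose m := by ring
  rw [div_pow, ← mul_div_assoc, le_div_iff₀ (by positivity)]
  exact_mod_cast Nat.le_of_mul_le_mul_right key hkm

theorem one_add_pow_eq_sum_range_choose_mul_pow {R : Type*} [CommSemiring R] (u : R) {n N : ℕ}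
    (hnN : n < N) : (1 + u) ^ n = ∑ m ∈ range N, (n.choose m : R) * u ^ m := by
  rw [add_comm, add_pow]
  refine sum_subset (range_subset_range.mpr hnN) (fun m _ hm => ?_) |>.trans ?_
  · rw [Nat.choose_eq_zero_of_lt (by simpa using hm)]; simp
  · exact sum_congr rfl fun m _ => by rw [one_pow, mul_one, mul_comm]

theorem card_filter_mul_lt_mul_le {ι : Type*} (s : Finset ι) (X : ι → ℝ) (a c : ℝ) :
    (#{i ∈ s | c * a < c * X i} : ℝ) ≤ exp (-(c * a)) * ∑ i ∈ s, exp (c * X i) := by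
  rw [mul_sum, card_eq_sum_ones, Nat.cast_sum, Nat.cast_one]
  calc ∑ i ∈ s with c * a < c * X i, (1 : ℝ)
      ≤ ∑ i ∈ s with c * a < c * X i, exp (-(c * a)) * exp (c * X i) := by
        refine sum_le_sum fun i hi => ?_
        rw [← exp_add]
        exact one_le_exp (by linarith [(mem_filter.mp hi).2])
    _ ≤ ∑ i ∈ s, exp (-(c * a)) * exp (c * X i) :=
        sum_le_sum_of_subset_of_nonneg (filter_subset _ _) fun _ _ _ => by positivity

theorem Real.sq_div_three_le_one_add_mul_log_one_add_sub {x : ℝ} (hx1 : -1 < x) (hx2 : x ≤ 1) :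
    x ^ 2 / 3 ≤ (1 + x) * log (1 + x) - x := by
  rcases le_total 0 x with hx0 | hx0
  · -- the first term of `log (1 + x) = 2 ∑ (x / (x + 2)) ^ (2 j + 1) / (2 j + 1)`
    have hlog : 2 * x / (x + 2) ≤ log (1 + x) := by
      simpa [mul_div_assoc] using le_hasSum (hasSum_log_one_add hx0) 0 fun _ _ => by positivity
    rw [div_le_iff₀ (by linarith)] at hlog
    nlinarith [mul_le_mul_of_nonneg_left hlog (by linarith : (0 : ℝ) ≤ 1 + x), sq_nonneg x]
  · -- `log z ≤ sinh (log z) = (z - z⁻¹) / 2` at `z = (1 + x)⁻¹ ≥ 1`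
    have hpos : 0 < 1 + x := by linarith
    have hsinh := self_le_sinh_iff.mpr (log_nonneg (one_le_inv₀ hpos |>.mpr (by linarith)))
    rw [sinh_log (inv_pos.mpr hpos), log_inv, inv_inv] at hsinh
    have := mul_le_mul_of_nonneg_left hsinh hpos.le
    rw [mul_div_assoc', mul_sub, mul_inv_cancel₀ hpos.ne'] at this
    nlinarith

section
variable {U : Type*} [Fintype U] [DecidableEq U]

theorem sum_choose_card_inter (T : Finset U) {s m : ℕ} (hms : m ≤ s) :
    ∑ S ∈ (univ : Finset U).powersetCard s, (#(S ∩ T)).choose m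
      = (#T).choose m * (Fintype.card U - m).choose (s - m) := by
  have hcount : ∀ S : Finset U, (#(S ∩ T)).choose m = #{A ∈ T.powersetCard m | A ⊆ S} := by
    intro S
    rw [← card_powersetCard]
    congr 1
    ext A
    simp only [mem_powersetCard, mem_filter, subset_inter_iff]
    tauto
  simp_rw [hcount]
  refine (sum_card_bipartiteAbove_eq_sum_card_bipartiteBelow
    (fun (S A : Finset U) => A ⊆ S)).trans ?_
  have hsupersets : ∀ A ∈ T.powersetCard m,
      #{S ∈ (univ : Finset U).powersetCard s | A ⊆ S}
        = (Fintype.card U - m).choose (s - m) := by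
    intro A hA
    obtain ⟨-, rfl⟩ := mem_powersetCard.mp hA
    rw [card_filter_powersetCard_subset A univ s (subset_univ A) hms, card_univ]
  rw [← card_powersetCard, ← smul_eq_mul, ← sum_const]
  exact sum_congr rfl hsupersets

theorem sum_choose_card_inter_le (T : Finset U) {s : ℕ} (hsk : s ≤ Fintype.card U) (m : ℕ) :
    ∑ S ∈ (univ : Finset U).powersetCard s, ((#(S ∩ T)).choose m : ℝ)
      ≤ (#T).choose m * ((Fintype.card U).choose s * ((s : ℝ) / Fintype.card U) ^ m) := by
  rcases le_or_gt m s with hms | hsm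
  · rw [← Nat.cast_sum, sum_choose_card_inter T hms, Nat.cast_mul]
    gcongr
    exact Nat.cast_choose_sub_sub_le hms hsk
  · have hvanish :
        ∀ S ∈ (univ : Finset U).powersetCard s, ((#(S ∩ T)).choose m : ℝ) = 0 := by
      intro S hS
      have hcard : #(S ∩ T) ≤ s :=
        (card_le_card inter_subset_left).trans (mem_powersetCard_univ.mp hS).le
      rw [Nat.choose_eq_zero_of_lt (hcard.trans_lt hsm), Nat.cast_zero]
    rw [sum_congr rfl hvanish, sum_const_zero]
    positivity

theorem sum_pow_card_inter_le_of_one_le (T : Finset U) {s : ℕ} (hsk : s ≤ Fintype.card U)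
    {θ : ℝ} (hθ : 1 ≤ θ) :
    ∑ S ∈ (univ : Finset U).powersetCard s, θ ^ #(S ∩ T)
      ≤ (Fintype.card U).choose s * (1 + (θ - 1) * s / Fintype.card U) ^ #T := by
  have hexpand : ∀ S ∈ (univ : Finset U).powersetCard s,
      θ ^ #(S ∩ T) = ∑ m ∈ range (#T + 1), ((#(S ∩ T)).choose m : ℝ) * (θ - 1) ^ m := by
    intro S _
    rw [← one_add_pow_eq_sum_range_choose_mul_pow _
      (Nat.lt_succ_of_le (card_le_card inter_subset_right)), add_sub_cancel]
  calc ∑ S ∈ (univ : Finset U).powersetCard s, θ ^ #(S ∩ T)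
      = ∑ m ∈ range (#T + 1), (∑ S ∈ (univ : Finset U).powersetCard s,
          ((#(S ∩ T)).choose m : ℝ)) * (θ - 1) ^ m := by
        rw [sum_congr rfl hexpand, sum_comm]
        simp_rw [sum_mul]
    _ ≤ ∑ m ∈ range (#T + 1), (#T).choose m *
          ((Fintype.card U).choose s * ((s : ℝ) / Fintype.card U) ^ m) * (θ - 1) ^ m := by
        gcongr with m
        exact sum_choose_card_inter_le T hsk m
    _ = (Fintype.card U).choose s * (1 + (θ - 1) * s / Fintype.card U) ^ #T := by
        rw [one_add_pow_eq_sum_range_choose_mul_pow _ (Nat.lt_succ_self _), mul_sum]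
        refine sum_congr rfl fun m _ => ?_
        rw [mul_div_assoc, mul_pow, div_pow]
        ring

theorem sum_powersetCard_univ_compl {M : Type*} [AddCommMonoid M] {s : ℕ}
    (hsk : s ≤ Fintype.card U) (f : Finset U → M) :
    ∑ S ∈ (univ : Finset U).powersetCard s, f Sᶜ
      = ∑ S ∈ (univ : Finset U).powersetCard (Fintype.card U - s), f S := by
  refine sum_nbij' compl compl (fun S hS => ?_) (fun S hS => ?_) (fun S _ => compl_compl S)
    (fun S _ => compl_compl S) (fun S _ => rfl)
  · rw [mem_powersetCard_univ] at hS ⊢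
    rw [card_compl, hS]
  · rw [mem_powersetCard_univ] at hS ⊢
    rw [card_compl, hS, Nat.sub_sub_self hsk]

theorem sum_pow_card_inter_le (T : Finset U) {s : ℕ} (hsk : s ≤ Fintype.card U)
    {θ : ℝ} (hθ : 0 < θ) :
    ∑ S ∈ (univ : Finset U).powersetCard s, θ ^ #(S ∩ T)
      ≤ (Fintype.card U).choose s * (1 + (θ - 1) * s / Fintype.card U) ^ #T := by
  rcases le_total 1 θ with hθ1 | hθ1
  · exact sum_pow_card_inter_le_of_one_le T hsk hθ1
  rcases (Fintype.card U).eq_zero_or_pos with hk | hk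
  · have : IsEmpty U := Fintype.card_eq_zero_iff.mp hk
    obtain rfl : s = 0 := by omega
    simp [Finset.eq_empty_of_isEmpty T]
  -- For `θ < 1` the expansion in powers of `θ - 1` alternates in sign: pass to `Sᶜ`, `θ⁻¹`.
  have hsplit : ∀ S : Finset U, θ ^ #(S ∩ T) = θ ^ #T * θ⁻¹ ^ #(Sᶜ ∩ T) := by
    intro S
    rw [inter_comm Sᶜ, ← sdiff_eq_inter_compl, ← card_inter_add_card_sdiff T S, inter_comm T,
      pow_add, mul_assoc, ← mul_pow, mul_inv_cancel₀ hθ.ne', one_pow, mul_one]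
  have hbase : θ * (1 + (θ⁻¹ - 1) * ((Fintype.card U - s : ℕ) : ℝ) / Fintype.card U)
      = 1 + (θ - 1) * s / Fintype.card U := by
    rw [Nat.cast_sub hsk]
    field_simp
    ring
  calc ∑ S ∈ (univ : Finset U).powersetCard s, θ ^ #(S ∩ T)
      = θ ^ #T *
          ∑ S ∈ (univ : Finset U).powersetCard (Fintype.card U - s), θ⁻¹ ^ #(S ∩ T) := by
        simp_rw [hsplit, ← mul_sum]
        rw [sum_powersetCard_univ_compl hsk (fun S => θ⁻¹ ^ #(S ∩ T))]
    _ ≤ θ ^ #T * ((Fintype.card U).choose (Fintype.card U - s) *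
          (1 + (θ⁻¹ - 1) * ((Fintype.card U - s : ℕ) : ℝ) / Fintype.card U) ^ #T) := by
        gcongr
        exact sum_pow_card_inter_le_of_one_le T (Nat.sub_le _ _) (one_le_inv₀ hθ |>.mpr hθ1)
    _ = (Fintype.card U).choose s * (1 + (θ - 1) * s / Fintype.card U) ^ #T := by
        rw [Nat.choose_symm hsk, ← hbase, mul_pow]
        ring

theorem sum_exp_mul_card_inter_le (T : Finset U) {s : ℕ} (hsk : s ≤ Fintype.card U) (c : ℝ) :
    ∑ S ∈ (univ : Finset U).powersetCard s, exp (c * #(S ∩ T))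
      ≤ (Fintype.card U).choose s * exp ((exp c - 1) * (s * #T / Fintype.card U)) := by
  have hbase : 0 ≤ 1 + (exp c - 1) * s / Fintype.card U := by
    have hp : (s : ℝ) / Fintype.card U ≤ 1 :=
      div_le_one_of_le₀ (by exact_mod_cast hsk) (by positivity)
    have hp0 : 0 ≤ (s : ℝ) / Fintype.card U := by positivity
    rw [mul_div_assoc]
    nlinarith [exp_pos c]
  calc ∑ S ∈ (univ : Finset U).powersetCard s, exp (c * #(S ∩ T))
      = ∑ S ∈ (univ : Finset U).powersetCard s, exp c ^ #(S ∩ T) := by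
        simp_rw [← exp_nat_mul, mul_comm]
    _ ≤ (Fintype.card U).choose s * (1 + (exp c - 1) * s / Fintype.card U) ^ #T :=
        sum_pow_card_inter_le T hsk (exp_pos c)
    _ ≤ (Fintype.card U).choose s * exp ((exp c - 1) * s / Fintype.card U) ^ #T := by
        gcongr
        linarith [add_one_le_exp ((exp c - 1) * s / Fintype.card U)]
    _ = (Fintype.card U).choose s * exp ((exp c - 1) * (s * #T / Fintype.card U)) := by
        rw [← exp_nat_mul]
        ring_nf

/-- For `x > 0` this is the upper tail `(1 + x) μ < |S ∩ T|`, for `x < 0` the lower tail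
`|S ∩ T| < (1 + x) μ`, since the sign of `log (1 + x)` flips the inequality. -/
theorem card_filter_log_mul_lt_log_mul_card_inter_le (T : Finset U) {s : ℕ}
    (hsk : s ≤ Fintype.card U) {x : ℝ} (hx1 : -1 < x) (hx2 : x ≤ 1) :
    (#{S ∈ (univ : Finset U).powersetCard s |
        log (1 + x) * ((1 + x) * s * #T / Fintype.card U) < log (1 + x) * #(S ∩ T)} : ℝ)
      ≤ (Fintype.card U).choose s * exp (-(x ^ 2 * s * #T) / (3 * Fintype.card U)) := by
  set μ : ℝ := s * #T / Fintype.card U with hμ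
  have hthreshold : (1 + x) * s * #T / Fintype.card U = (1 + x) * μ := by rw [hμ]; ring
  have hexponent : -(x ^ 2 * s * #T) / (3 * Fintype.card U) = -(μ * (x ^ 2 / 3)) := by
    rw [hμ]; ring
  rw [hthreshold, hexponent]
  calc _ ≤ exp (-(log (1 + x) * ((1 + x) * μ))) *
          ∑ S ∈ (univ : Finset U).powersetCard s, exp (log (1 + x) * #(S ∩ T)) :=
        card_filter_mul_lt_mul_le _ (fun S => (#(S ∩ T) : ℝ)) _ _
    _ ≤ exp (-(log (1 + x) * ((1 + x) * μ))) *
          ((Fintype.card U).choose s * exp ((exp (log (1 + x)) - 1) * μ)) := by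
        gcongr
        exact sum_exp_mul_card_inter_le T hsk _
    _ = (Fintype.card U).choose s * exp (-(μ * ((1 + x) * log (1 + x) - x))) := by
        rw [exp_log (by linarith), mul_left_comm, ← exp_add]
        ring_nf
    _ ≤ (Fintype.card U).choose s * exp (-(μ * (x ^ 2 / 3))) := by
        gcongr
        exact Real.sq_div_three_le_one_add_mul_log_one_add_sub hx1 hx2

end

theorem uniform_subset_intersection_concentration_general
    {U : Type*} [Fintype U] [DecidableEq U]
    (T : Finset U)
    (s : ℕ) (hsk : s ≤ Fintype.card U)
    (α : ℝ) (hα0 : 0 < α) (hα1 : α < 1) :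
    ((((univ : Finset U).powersetCard s).filter (fun S =>
        ((S ∩ T).card : ℝ) ∉
          Set.Icc ((1 - α) * s * T.card / Fintype.card U)
            ((1 + α) * s * T.card / Fintype.card U))).card : ℝ) /
      (((univ : Finset U).powersetCard s).card : ℝ)
      ≤ 2 * Real.exp (-(α ^ 2 * s * T.card) / (3 * Fintype.card U)) := by
  have hupper := card_filter_log_mul_lt_log_mul_card_inter_le T hsk (x := α) (by linarith) hα1.le
  have hlower :=
    card_filter_log_mul_lt_log_mul_card_inter_le T hsk (x := -α) (by linarith) (by linarith)
  rw [← sub_eq_add_neg, neg_sq] at hlower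
  have hsplit : {S ∈ (univ : Finset U).powersetCard s | ((S ∩ T).card : ℝ) ∉
        Set.Icc ((1 - α) * s * T.card / Fintype.card U) ((1 + α) * s * T.card / Fintype.card U)}
      ⊆ {S ∈ (univ : Finset U).powersetCard s |
            log (1 - α) * ((1 - α) * s * #T / Fintype.card U) < log (1 - α) * #(S ∩ T)}
        ∪ {S ∈ (univ : Finset U).powersetCard s |
            log (1 + α) * ((1 + α) * s * #T / Fintype.card U) < log (1 + α) * #(S ∩ T)} := by
    intro S hS
    simp only [mem_union, mem_filter, Set.mem_Icc, not_and_or, not_le] at hS ⊢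
    rw [mul_lt_mul_left_of_neg (log_neg (by linarith) (by linarith)),
      mul_lt_mul_iff_right₀ (log_pos (by linarith))]
    tauto
  have hcount := (Nat.cast_le (α := ℝ)).mpr ((card_le_card hsplit).trans (card_union_le _ _))
  push_cast at hcount
  rw [card_powersetCard, card_univ, div_le_iff₀ (by exact_mod_cast Nat.choose_pos hsk)]
  linarith

/-- Concentration of the intersection of a uniformly random `s`-element subset `S` of a
`k`-element universe `U` with a fixed set `T ⊆ U`:
`Pr[ |S ∩ T| ∉ [(1−α)·s·|T|/k, (1+α)·s·|T|/k] ] ≤ 2·exp(−α²·s·|T|/(3k))`.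
The probability is expressed by counting: the random set `S` is uniform over
`(univ : Finset U).powersetCard s`, the family of all `s`-element subsets of `U`. -/
theorem uniform_subset_intersection_concentration
    {U : Type*} [Fintype U] [DecidableEq U]
    (hk : 1 ≤ Fintype.card U) (T : Finset U)
    (s : ℕ) (hs1 : 1 ≤ s) (hsk : s ≤ Fintype.card U)
    (α : ℝ) (hα0 : 0 < α) (hα1 : α < 1) :
    ((((univ : Finset U).powersetCard s).filter (fun S =>
        ((S ∩ T).card : ℝ) ∉
          Set.Icc ((1 - α) * s * T.card / Fintype.card U)
            ((1 + α) * s * T.card / Fintype.card U))).card : ℝ) /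
      (((univ : Finset U).powersetCard s).card : ℝ)
      ≤ 2 * Real.exp (-(α ^ 2 * s * T.card) / (3 * Fintype.card U)) :=
  uniform_subset_intersection_concentration_general T s hsk α hα0 hα1
end

section
/- Let U be a finite set of size k ≥ 1, let 0 < α < 1, 0 < δ < 1, 1 ≤ s ≤ k, and let S_1, …, S_t be independent uniformly random s-element subsets of U. For T ⊆ U, say that S_i has an unusual intersection with T if either (|T| ≥ δk and |S_i ∩ T| ∉ [(1−α)·s·|T|/k, (1+α)·s·|T|/k]) or (|T| < δk and |S_i ∩ T| > (1+α)·δ·s). Then the probability that there exists some subset T ⊆ U such that more than 4·t·exp(−α²·δ·s/3) of the sets S_1, …, S_t have an unusual intersection with T is at most 2^k · exp(−(t/3)·exp(−α²·δ·s/3)). -/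
/-
For a fixed `T`, the size `|S ∩ T|` of a uniformly random `s`-subset `S` is hypergeometric, and
its moment generating function is dominated by that of the binomial law `Bin(s, |T|/k)`: this is
proved by induction on `T`, deleting one point of `T` from both `T` and the ground set. The usual
Chernoff estimates then show that `S` has an unusual intersection with `T` with probability at
most `2q`, where `q = exp(-α²δs/3)`. The number of unusual `S_i` is a sum of `t` independent
indicators of mean at most `2q`, so the exponential moment `E[e^X] ≤ exp(2(e-1)qt)` and
`2(e-1) - 4 ≤ -1/3` bound the probability that more than `4tq` of them are unusual by
`exp(-tq/3)`. A union bound over the `2^k` sets `T` finishes the proof.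
-/

open Finset

/-- `S` has an *unusual intersection* with `T` (within a universe `U` of size `k`,
with parameters `α`, `δ` and sample size `s`) if either `|T| ≥ δk` and
`|S ∩ T| ∉ [(1−α)·s·|T|/k, (1+α)·s·|T|/k]`, or `|T| < δk` and `|S ∩ T| > (1+α)·δ·s`. -/
def UnusualIntersection {U : Type*} [Fintype U] [DecidableEq U]
    (α δ : ℝ) (s : ℕ) (T S : Finset U) : Prop :=
  (δ * Fintype.card U ≤ (T.card : ℝ) ∧
      ((S ∩ T).card : ℝ) ∉
        Set.Icc ((1 - α) * s * T.card / Fintype.card U)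
          ((1 + α) * s * T.card / Fintype.card U)) ∨
  ((T.card : ℝ) < δ * Fintype.card U ∧ (1 + α) * δ * s < ((S ∩ T).card : ℝ))

noncomputable instance {U : Type*} [Fintype U] [DecidableEq U] (α δ : ℝ) (s : ℕ)
    (T S : Finset U) : Decidable (UnusualIntersection α δ s T S) := by
  unfold UnusualIntersection; infer_instance

open Real

lemma add_sq_div_three_le_mul_log_one_add {a : ℝ} (h0 : 0 ≤ a) (h1 : a ≤ 1) :
    a + a ^ 2 / 3 ≤ (1 + a) * log (1 + a) :=
  calc a + a ^ 2 / 3 ≤ (1 + a) * (2 * a / (a + 2)) := by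
        rw [mul_div_assoc', le_div_iff₀ (by positivity)]
        nlinarith [mul_nonneg (sq_nonneg a) (sub_nonneg.2 h1)]
    _ ≤ (1 + a) * log (1 + a) := by gcongr; exact le_log_one_add_of_nonneg h0

lemma neg_add_sq_div_two_le_mul_log_one_sub {a : ℝ} (h0 : 0 ≤ a) (h1 : a < 1) :
    -a + a ^ 2 / 2 ≤ (1 - a) * log (1 - a) := by
  have h2a : 0 < 2 - a := by linarith
  have h1a : 0 < 1 - a := by linarith
  -- At `x = a / (2 - a)` the quotient `(1 + x) / (1 - x)` is `(1 - a)⁻¹`.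
  have hlog := log_div_le_sum_range_add (x := a / (2 - a)) (by positivity)
    (by rw [div_lt_one h2a]; linarith) 0
  have hplus : 1 + a / (2 - a) = 2 / (2 - a) := by field_simp; ring
  have hminus : 1 - a / (2 - a) = 2 * (1 - a) / (2 - a) := by field_simp; ring
  have hx : (1 + a / (2 - a)) / (1 - a / (2 - a)) = (1 - a)⁻¹ := by
    rw [hplus, hminus]
    field_simp
  have hrhs : a / (2 - a) / (1 - (a / (2 - a)) ^ 2) = a * (2 - a) / (4 * (1 - a)) := by
    rw [show 1 - (a / (2 - a)) ^ 2 = (1 - a / (2 - a)) * (1 + a / (2 - a)) by ring,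
      hplus, hminus]
    field_simp
    ring
  simp only [hx, log_inv, sum_range_zero, zero_add, mul_zero, pow_one, hrhs] at hlog
  rw [le_div_iff₀ (by positivity)] at hlog
  nlinarith

lemma card_filter_le_mul_exp_le_sum_exp {ι : Type*} (s : Finset ι) (g : ι → ℝ) (c : ℝ) :
    #(s.filter fun i => c ≤ g i) * exp c ≤ ∑ i ∈ s, exp (g i) :=
  calc #(s.filter fun i => c ≤ g i) * exp c = ∑ i ∈ s.filter (c ≤ g ·), exp c := by
        rw [sum_const, nsmul_eq_mul]
    _ ≤ ∑ i ∈ s.filter (c ≤ g ·), exp (g i) :=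
        sum_le_sum fun i hi => exp_le_exp.2 (mem_filter.1 hi).2
    _ ≤ ∑ i ∈ s, exp (g i) :=
        sum_le_sum_of_subset_of_nonneg (filter_subset _ _) fun _ _ _ => (exp_pos _).le

lemma one_add_mul_sub_one_nonneg {p z : ℝ} (hp0 : 0 ≤ p) (hp1 : p ≤ 1) (hz : 0 ≤ z) :
    0 ≤ 1 + p * (z - 1) := by
  nlinarith

lemma choose_mul_pow_add_mul_choose_mul_pow_le {k m : ℕ} (hmk : m ≤ k) {z : ℝ} (hz : 0 ≤ z)
    (n : ℕ) :
    (k.choose (n + 1) : ℝ) * (1 + m / k * (z - 1)) ^ (n + 1)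
        + z * ((k.choose n : ℝ) * (1 + m / k * (z - 1)) ^ n)
      ≤ ((k + 1).choose (n + 1) : ℝ) * (1 + (m + 1) / (k + 1) * (z - 1)) ^ (n + 1) := by
  have hmkR : (m : ℝ) ≤ k := by exact_mod_cast hmk
  set b : ℝ := 1 + m / k * (z - 1)
  set g : ℝ := 1 + (m + 1) / (k + 1) * (z - 1)
  have hb : 0 ≤ b := one_add_mul_sub_one_nonneg (by positivity)
    (div_le_one_of_le₀ hmkR (by positivity)) hz
  have hg : 0 ≤ g := one_add_mul_sub_one_nonneg (by positivity)
    (div_le_one_of_le₀ (by linarith) (by positivity)) hz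
  have hz_eq : z = (k + 1) * g - k * b := by
    rcases Nat.eq_zero_or_pos k with rfl | hk
    · obtain rfl : m = 0 := by omega
      simp [g, b]
    · simp only [g, b]
      field_simp
      ring
  -- Pascal's rule, absorption and `hz_eq` reduce the claim to Bernoulli's inequality for `g / b`.
  have hpascal : ((k + 1).choose (n + 1) : ℝ) = k.choose n + k.choose (n + 1) := by
    exact_mod_cast Nat.choose_succ_succ' k n
  have habsorb : ((k : ℝ) + 1) * k.choose n = (k + 1).choose (n + 1) * (n + 1) := by
    exact_mod_cast Nat.add_one_mul_choose_eq k n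
  have hbernoulli : b ^ (n + 1) + (n + 1) * b ^ n * (g - b) ≤ g ^ (n + 1) := by
    simpa using pow_add_mul_le_add_pow hb (by linarith : 0 ≤ 2 * b + (g - b)) (n + 1)
  have hlhs : (k.choose (n + 1) : ℝ) * b ^ (n + 1) + z * ((k.choose n : ℝ) * b ^ n)
      = (k + 1).choose (n + 1) * (b ^ (n + 1) + (n + 1) * b ^ n * (g - b)) := by
    refine mul_left_cancel₀ (by positivity : (k : ℝ) + 1 ≠ 0) ?_
    linear_combination (-(k + 1) * b ^ (n + 1)) * hpascal + (b ^ n * (z - b)) * habsorb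
      + ((n + 1) * ((k + 1).choose (n + 1) : ℝ) * b ^ n) * hz_eq
  rw [hlhs]
  exact mul_le_mul_of_nonneg_left hbernoulli (by positivity)

section Hypergeometric

variable {U : Type*} [DecidableEq U]

lemma sum_powersetCard_succ_insert_pow_card_inter {u : U} {V : Finset U} (hu : u ∉ V)
    (T : Finset U) (z : ℝ) (n : ℕ) :
    ∑ S ∈ (insert u V).powersetCard (n + 1), z ^ #(S ∩ insert u T)
      = ∑ S ∈ V.powersetCard (n + 1), z ^ #(S ∩ T)
        + z * ∑ S ∈ V.powersetCard n, z ^ #(S ∩ T) := by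
  have hu_notMem : ∀ {m}, ∀ S ∈ V.powersetCard m, u ∉ S :=
    fun S hS huS => hu ((mem_powersetCard.1 hS).1 huS)
  rw [powersetCard_succ_insert hu, sum_union, sum_image, mul_sum]
  · congr 1 <;> refine sum_congr rfl fun S hS => ?_
    · rw [inter_insert_of_notMem (hu_notMem S hS)]
    · rw [← insert_inter_distrib,
        card_insert_of_notMem fun h => hu_notMem S hS (mem_inter.1 h).1, pow_succ']
  · exact fun S hS S' hS' h => by
      rw [← erase_insert (hu_notMem S hS), ← erase_insert (hu_notMem S' hS')]
      exact congrArg (erase · u) h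
  · rw [disjoint_left]
    intro S hS hS'
    obtain ⟨S', -, rfl⟩ := mem_image.1 hS'
    exact hu_notMem _ hS (mem_insert_self u S')

theorem sum_powersetCard_pow_card_inter_le {z : ℝ} (hz : 0 ≤ z) {T V : Finset U} (hTV : T ⊆ V)
    (s : ℕ) :
    ∑ S ∈ V.powersetCard s, z ^ #(S ∩ T) ≤ (#V).choose s * (1 + #T / #V * (z - 1)) ^ s := by
  induction T using Finset.induction_on generalizing V s with
  | empty => simp
  | insert u T huT ih =>
    obtain ⟨V, rfl, huV⟩ : ∃ V', V = insert u V' ∧ u ∉ V' :=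
      ⟨V.erase u, (insert_erase (insert_subset_iff.1 hTV).1).symm, notMem_erase u V⟩
    replace hTV : T ⊆ V := (subset_insert_iff_of_notMem huT).1 (insert_subset_iff.1 hTV).2
    rcases s with _ | n
    · simp
    rw [sum_powersetCard_succ_insert_pow_card_inter huV, card_insert_of_notMem huT,
      card_insert_of_notMem huV]
    push_cast
    calc _ ≤ ((#V).choose (n + 1) : ℝ) * (1 + #T / #V * (z - 1)) ^ (n + 1)
          + z * ((#V).choose n * (1 + #T / #V * (z - 1)) ^ n) := by
          gcongr
          · exact ih hTV (n + 1)
          · exact ih hTV n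
      _ ≤ _ := choose_mul_pow_add_mul_choose_mul_pow_le (card_le_card hTV) hz n

theorem card_filter_mul_le_mul_card_inter_le {T V : Finset U} (hTV : T ⊆ V) (s : ℕ)
    (l a : ℝ) :
    (#((V.powersetCard s).filter fun S => l * a ≤ l * #(S ∩ T)) : ℝ)
      ≤ (#V).choose s * exp ((exp l - 1) * (s * (#T / #V)) - l * a) := by
  have hbase : 0 ≤ 1 + #T / #V * (exp l - 1) := one_add_mul_sub_one_nonneg (by positivity)
    (div_le_one_of_le₀ (by exact_mod_cast card_le_card hTV) (by positivity)) (exp_pos l).le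
  have hmarkov := card_filter_le_mul_exp_le_sum_exp (V.powersetCard s)
    (fun S => l * #(S ∩ T)) (l * a)
  have hmgf := sum_powersetCard_pow_card_inter_le (exp_pos l).le hTV s
  have hsum : ∑ S ∈ V.powersetCard s, exp (l * #(S ∩ T))
      = ∑ S ∈ V.powersetCard s, exp l ^ #(S ∩ T) := by
    simp only [← exp_nat_mul, mul_comm l]
  have hpow : (1 + #T / #V * (exp l - 1)) ^ s ≤ exp ((exp l - 1) * (s * (#T / #V))) := by
    calc _ ≤ exp (#T / #V * (exp l - 1)) ^ s := by
          gcongr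
          linarith [add_one_le_exp (#T / #V * (exp l - 1))]
      _ = _ := by rw [← exp_nat_mul]; ring_nf
  rw [exp_sub, mul_div_assoc', le_div_iff₀ (exp_pos _)]
  calc _ ≤ _ := hmarkov
    _ = _ := hsum
    _ ≤ _ := hmgf
    _ ≤ _ := by gcongr

theorem card_filter_lt_card_inter_le {T V : Finset U} (hTV : T ⊆ V) (s : ℕ) {ε : ℝ}
    (hε : 0 ≤ ε) (a : ℝ) :
    (#((V.powersetCard s).filter fun S => a < #(S ∩ T)) : ℝ)
      ≤ (#V).choose s * exp (ε * (s * (#T / #V)) - log (1 + ε) * a) := by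
  have hl : 0 ≤ log (1 + ε) := log_nonneg (by linarith)
  calc _ ≤ (#((V.powersetCard s).filter
          fun S => log (1 + ε) * a ≤ log (1 + ε) * #(S ∩ T)) : ℝ) := by
        gcongr with S
        exact fun h => mul_le_mul_of_nonneg_left h.le hl
    _ ≤ _ := by
        simpa [exp_log (by linarith : 0 < 1 + ε)] using
          card_filter_mul_le_mul_card_inter_le hTV s (log (1 + ε)) a

theorem card_filter_card_inter_lt_le {T V : Finset U} (hTV : T ⊆ V) (s : ℕ) {ε : ℝ}
    (hε0 : 0 ≤ ε) (hε1 : ε < 1) (a : ℝ) :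
    (#((V.powersetCard s).filter fun S => #(S ∩ T) < a) : ℝ)
      ≤ (#V).choose s * exp (-ε * (s * (#T / #V)) - log (1 - ε) * a) := by
  have hl : log (1 - ε) ≤ 0 := log_nonpos (by linarith) (by linarith)
  calc _ ≤ (#((V.powersetCard s).filter
          fun S => log (1 - ε) * a ≤ log (1 - ε) * #(S ∩ T)) : ℝ) := by
        gcongr with S
        exact fun h => mul_le_mul_of_nonpos_left h.le hl
    _ ≤ _ := by
        simpa [exp_log (by linarith : 0 < 1 - ε)] using
          card_filter_mul_le_mul_card_inter_le hTV s (log (1 - ε)) a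

end Hypergeometric

section Unusual
variable {U : Type*} [Fintype U] [DecidableEq U] {α δ : ℝ} {s : ℕ}

lemma card_filter_unusualIntersection_le_of_lt (hα0 : 0 ≤ α) (hα1 : α ≤ 1) {T : Finset U}
    (hT : #T < δ * Fintype.card U) :
    (#((univ.powersetCard s).filter (UnusualIntersection α δ s T)) : ℝ)
      ≤ (Fintype.card U).choose s * exp (-(α ^ 2 * δ * s) / 3) := by
  have hδk : 0 < δ * Fintype.card U := (Nat.cast_nonneg _).trans_lt hT
  have hδ : 0 < δ := pos_of_mul_pos_left hδk (Nat.cast_nonneg _)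
  have hp : (#T / Fintype.card U : ℝ) ≤ δ := by
    rw [div_le_iff₀ (pos_of_mul_pos_right hδk hδ.le)]; exact hT.le
  have hsub : (univ.powersetCard s).filter (UnusualIntersection α δ s T)
      ⊆ (univ.powersetCard s).filter fun S => (1 + α) * δ * s < #(S ∩ T) := by
    refine monotone_filter_right _ fun S _ hS => ?_
    rcases hS with ⟨hT', -⟩ | ⟨-, hS⟩
    · exact absurd hT' (not_le.2 hT)
    · exact hS
  have hlog := mul_le_mul_of_nonneg_right (add_sq_div_three_le_mul_log_one_add hα0 hα1)
    (by positivity : 0 ≤ δ * s)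
  calc _ ≤ _ := Nat.cast_le.2 (card_le_card hsub)
    _ ≤ _ := card_filter_lt_card_inter_le (subset_univ T) s hα0 _
    _ ≤ _ := by
        rw [card_univ]
        gcongr
        nlinarith [mul_le_mul_of_nonneg_left hp (by positivity : 0 ≤ α * s)]

lemma card_filter_unusualIntersection_le_of_le (hk : 0 < Fintype.card U) (hα0 : 0 ≤ α)
    (hα1 : α < 1) {T : Finset U} (hT : δ * Fintype.card U ≤ #T) :
    (#((univ.powersetCard s).filter (UnusualIntersection α δ s T)) : ℝ)
      ≤ 2 * ((Fintype.card U).choose s * exp (-(α ^ 2 * δ * s) / 3)) := by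
  set μ : ℝ := s * (#T / Fintype.card U)
  have hμ0 : 0 ≤ μ := by positivity
  have hδμ : δ * s ≤ μ := by
    have : δ ≤ #T / Fintype.card U := by rw [le_div_iff₀ (by exact_mod_cast hk)]; exact hT
    simp only [μ]
    nlinarith [(s.cast_nonneg (α := ℝ))]
  have hsub : (univ.powersetCard s).filter (UnusualIntersection α δ s T)
      ⊆ (univ.powersetCard s).filter (fun S => #(S ∩ T) < (1 - α) * μ)
        ∪ (univ.powersetCard s).filter (fun S => (1 + α) * μ < #(S ∩ T)) := by
    rw [← filter_or]
    refine monotone_filter_right _ fun S _ hS => ?_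
    rcases hS with ⟨-, hS⟩ | ⟨hT', -⟩
    · have hμ : ∀ c : ℝ, c * s * #T / Fintype.card U = c * μ := fun c => by
        simp only [μ]; ring
      simpa only [Set.mem_Icc, not_and_or, not_le, hμ] using hS
    · exact absurd hT (not_le.2 hT')
  have hlower := card_filter_card_inter_lt_le (subset_univ T) s hα0 hα1 ((1 - α) * μ)
  have hupper := card_filter_lt_card_inter_le (subset_univ T) s hα0 ((1 + α) * μ)
  rw [card_univ] at hlower hupper
  have hlog_lower :=
    mul_le_mul_of_nonneg_right (neg_add_sq_div_two_le_mul_log_one_sub hα0 hα1) hμ0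
  have hlog_upper :=
    mul_le_mul_of_nonneg_right (add_sq_div_three_le_mul_log_one_add hα0 hα1.le) hμ0
  have hα2 := mul_le_mul_of_nonneg_left hδμ (sq_nonneg α)
  calc _ ≤ (#((univ.powersetCard s).filter (fun S => #(S ∩ T) < (1 - α) * μ)) : ℝ)
        + #((univ.powersetCard s).filter (fun S => (1 + α) * μ < #(S ∩ T))) := by
        exact_mod_cast (card_le_card hsub).trans (card_union_le _ _)
    _ ≤ (Fintype.card U).choose s * exp (-(α ^ 2 * δ * s) / 3)
        + (Fintype.card U).choose s * exp (-(α ^ 2 * δ * s) / 3) := by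
        gcongr
        · refine hlower.trans ?_
          gcongr
          nlinarith
        · refine hupper.trans ?_
          gcongr
          nlinarith
    _ = _ := by ring

lemma card_filter_unusualIntersection_le (hk : 0 < Fintype.card U) (hα0 : 0 ≤ α) (hα1 : α < 1)
    (T : Finset U) :
    (#((univ.powersetCard s).filter (UnusualIntersection α δ s T)) : ℝ)
      ≤ 2 * ((Fintype.card U).choose s * exp (-(α ^ 2 * δ * s) / 3)) := by
  rcases lt_or_ge (#T : ℝ) (δ * Fintype.card U) with hT | hT
  · exact (card_filter_unusualIntersection_le_of_lt hα0 hα1.le hT).trans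
      (le_mul_of_one_le_left (by positivity) one_le_two)
  · exact card_filter_unusualIntersection_le_of_le hk hα0 hα1 hT

end Unusual

section Repetition
variable {Ω : Type*} [Fintype Ω] (P : Ω → Prop) [DecidablePred P]

lemma sum_exp_card_filter_apply (t : ℕ) :
    ∑ f : Fin t → Ω, exp #(univ.filter fun i => P (f i))
      = (Fintype.card Ω + (exp 1 - 1) * #(univ.filter P)) ^ t := by
  have hw : ∀ f : Fin t → Ω, exp #(univ.filter fun i => P (f i))
      = ∏ i, exp (if P (f i) then 1 else 0) := fun f => by
    rw [← exp_sum, sum_boole]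
  have hsum : ∑ x : Ω, exp (if P x then 1 else 0)
      = Fintype.card Ω + (exp 1 - 1) * #(univ.filter P) := by
    simp only [apply_ite exp, exp_zero]
    have hcard : (#(univ.filter P) : ℝ) + #(univ.filter fun x => ¬P x) = Fintype.card Ω := by
      exact_mod_cast card_filter_add_card_filter_not (s := univ) P
    rw [sum_ite, sum_const, sum_const, nsmul_eq_mul, nsmul_eq_mul, mul_one]
    linear_combination hcard
  simp only [hw, ← hsum, Fintype.sum_pow]

theorem card_filter_four_mul_lt_card_filter_apply_le {q : ℝ} (hq : 0 ≤ q)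
    (hP : (#(univ.filter P) : ℝ) ≤ 2 * q * Fintype.card Ω) (t : ℕ) :
    (#(univ.filter fun f : Fin t → Ω => 4 * t * q < #(univ.filter fun i => P (f i))) : ℝ)
      ≤ exp (-(t * q) / 3) * Fintype.card Ω ^ t := by
  -- `2 (e - 1) q - 4 q ≤ -q / 3` only needs `e ≤ 17 / 6`.
  have he : exp 1 < 17 / 6 := exp_one_lt_d9.trans (by norm_num)
  have he1 : 1 ≤ exp 1 := one_le_exp zero_le_one
  have hmarkov := card_filter_le_mul_exp_le_sum_exp univ
    (fun f : Fin t → Ω => (#(univ.filter fun i => P (f i)) : ℝ)) (4 * t * q)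
  rw [sum_exp_card_filter_apply] at hmarkov
  have hbase : (Fintype.card Ω + (exp 1 - 1) * #(univ.filter P) : ℝ)
      ≤ Fintype.card Ω * exp (2 * q * (exp 1 - 1)) := by
    nlinarith [add_one_le_exp (2 * q * (exp 1 - 1)), (Fintype.card Ω).cast_nonneg (α := ℝ)]
  have hpow : (Fintype.card Ω + (exp 1 - 1) * #(univ.filter P) : ℝ) ^ t
      ≤ Fintype.card Ω ^ t * exp (4 * t * q) * exp (-(t * q) / 3) := by
    calc _ ≤ (Fintype.card Ω * exp (2 * q * (exp 1 - 1))) ^ t := by gcongr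
      _ = Fintype.card Ω ^ t * exp (t * (2 * q * (exp 1 - 1))) := by rw [mul_pow, exp_nat_mul]
      _ ≤ Fintype.card Ω ^ t * exp (4 * t * q + -(t * q) / 3) := by
          gcongr
          nlinarith [mul_nonneg (t.cast_nonneg (α := ℝ)) hq]
      _ = _ := by rw [exp_add]; ring
  calc _ ≤ (#(univ.filter fun f : Fin t → Ω =>
          4 * t * q ≤ #(univ.filter fun i => P (f i))) : ℝ) := by
        gcongr with f
        exact fun h => h.le
    _ ≤ _ := by
        rw [← le_div_iff₀ (exp_pos _)] at hmarkov
        refine hmarkov.trans ?_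
        rw [div_le_iff₀ (exp_pos _)]
        linarith

end Repetition

lemma card_filter_exists_le_card_mul {α β : Type*} [Fintype β] (s : Finset α)
    (P : α → β → Prop) [∀ a b, Decidable (P a b)] [DecidablePred fun a => ∃ b, P a b]
    {c : ℝ} (h : ∀ b, (#(s.filter fun a => P a b) : ℝ) ≤ c) :
    (#(s.filter fun a => ∃ b, P a b) : ℝ) ≤ Fintype.card β * c := by
  classical
  calc (#(s.filter fun a => ∃ b, P a b) : ℝ)
      ≤ #(univ.biUnion fun b => s.filter fun a => P a b) := by
        gcongr
        exact fun a ha => by simpa using ha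
    _ ≤ ∑ b, (#(s.filter fun a => P a b) : ℝ) := by exact_mod_cast card_biUnion_le
    _ ≤ ∑ _b : β, c := sum_le_sum fun b _ => h b
    _ = Fintype.card β * c := by rw [sum_const, card_univ, nsmul_eq_mul]

lemma card_filter_subtype_card_eq {U : Type*} [Fintype U] (s : ℕ)
    (P : Finset U → Prop) [DecidablePred P] :
    #(univ.filter fun A : {A : Finset U // #A = s} => P A) = #((univ.powersetCard s).filter P) := by
  rw [← card_map (Function.Embedding.subtype _)]
  congr 1
  ext A
  simp [and_comm]

theorem exists_unusual_intersections_union_bound_general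
    {U : Type*} [Fintype U] [DecidableEq U]
    (hk : 1 ≤ Fintype.card U)
    (α δ : ℝ) (hα0 : 0 < α) (hα1 : α < 1)
    (s : ℕ)
    (t : ℕ) :
    (((univ : Finset (Fin t → {A : Finset U // A.card = s})).filter (fun S =>
        ∃ T : Finset U,
          4 * t * Real.exp (-(α ^ 2 * δ * s) / 3) <
            (((univ : Finset (Fin t)).filter
                (fun i => UnusualIntersection α δ s T (S i).1)).card : ℝ))).card : ℝ) /
      (Fintype.card (Fin t → {A : Finset U // A.card = s}) : ℝ)
      ≤ 2 ^ (Fintype.card U) *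
          Real.exp (-((t : ℝ) / 3) * Real.exp (-(α ^ 2 * δ * s) / 3)) := by
  set q := exp (-(α ^ 2 * δ * s) / 3)
  have hbad (T : Finset U) :
      (#(univ.filter fun S : Fin t → {A : Finset U // #A = s} =>
          4 * t * q < #(univ.filter fun i => UnusualIntersection α δ s T (S i).1)) : ℝ)
        ≤ exp (-(t * q) / 3) * Fintype.card {A : Finset U // #A = s} ^ t := by
    refine card_filter_four_mul_lt_card_filter_apply_le
      (fun A : {A : Finset U // #A = s} => UnusualIntersection α δ s T A) (exp_pos _).le ?_ t
    rw [card_filter_subtype_card_eq, Fintype.card_finset_len]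
    linarith [card_filter_unusualIntersection_le (δ := δ) (s := s) hk hα0.le hα1 T]
  refine div_le_of_le_mul₀ (by positivity) (by positivity)
    ((card_filter_exists_le_card_mul _ _ hbad).trans_eq ?_)
  rw [Fintype.card_finset, Fintype.card_fun, Fintype.card_fin]
  push_cast
  ring_nf

/-- For `t` independent uniformly random `s`-element subsets `S 1, …, S t` of a universe `U`
of size `k ≥ 1`, the probability that there exists some subset `T ⊆ U` such that more than
`4·t·exp(−α²·δ·s/3)` of the sets `S i` have an unusual intersection with `T` is at most
`2^k · exp(−(t/3)·exp(−α²·δ·s/3))`.  The tuple `(S 1, …, S t)` of independent uniform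
`s`-sets is modelled as a uniform element of the (finite) space of functions
`Fin t → {A : Finset U // A.card = s}`, and the probability is expressed by counting. -/
theorem exists_unusual_intersections_union_bound
    {U : Type*} [Fintype U] [DecidableEq U]
    (hk : 1 ≤ Fintype.card U)
    (α δ : ℝ) (hα0 : 0 < α) (hα1 : α < 1) (hδ0 : 0 < δ) (hδ1 : δ < 1)
    (s : ℕ) (hs1 : 1 ≤ s) (hsk : s ≤ Fintype.card U)
    (t : ℕ) :
    (((univ : Finset (Fin t → {A : Finset U // A.card = s})).filter (fun S =>
        ∃ T : Finset U,
          4 * t * Real.exp (-(α ^ 2 * δ * s) / 3) <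
            (((univ : Finset (Fin t)).filter
                (fun i => UnusualIntersection α δ s T (S i).1)).card : ℝ))).card : ℝ) /
      (Fintype.card (Fin t → {A : Finset U // A.card = s}) : ℝ)
      ≤ 2 ^ (Fintype.card U) *
          Real.exp (-((t : ℝ) / 3) * Real.exp (-(α ^ 2 * δ * s) / 3)) :=
  exists_unusual_intersections_union_bound_general hk α δ hα0 hα1 s t
end

section
/- Let G be a finite simple graph with maximum degree exactly Δ, where Δ ≥ 2, and set Δ_L = 2(Δ−1). Then every edge e of G satisfies ζ_L(e) ≥ (Δ−2)/2, where ζ_L(e) = (1/Δ_L)·( Δ_L(Δ_L−1)/2 − m(e) ) and m(e) denotes the number of unordered pairs {f,g} of distinct edges of G, both different from e, each sharing an endpoint with e, such that f and g share an endpoint with each other. Equivalently, every edge of G is ((Δ_L − 2)/4)-sparse as a vertex of the line graph L(G). -/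
open Finset Classical

/-- Every edge of a finite simple graph with maximum degree exactly `Δ ≥ 2` is
`((Δ_L − 2)/4)`-sparse as a vertex of the line graph, where `Δ_L = 2(Δ−1)`: writing
`m e` for the number of unordered pairs `{f, g}` of distinct edges, both different from
`e`, each sharing an endpoint with `e`, and sharing an endpoint with each other, we have
`ζ_L(e) = (1/Δ_L)·(Δ_L(Δ_L−1)/2 − m e) ≥ (Δ−2)/2`. -/
theorem line_graph_sparsity
    {V : Type*} [Fintype V] [DecidableEq V] (G : SimpleGraph V) [DecidableRel G.Adj]
    (Δ : ℕ) (hΔ : 2 ≤ Δ) (hdeg : ∀ v, G.degree v ≤ Δ) (hmax : ∃ v, G.degree v = Δ)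
    (e : Sym2 V) (he : e ∈ G.edgeFinset) :
    ((Δ : ℝ) - 2) / 2 ≤
      (1 / (2 * ((Δ : ℝ) - 1))) *
        ((2 * ((Δ : ℝ) - 1)) * (2 * ((Δ : ℝ) - 1) - 1) / 2 -
          (((G.edgeFinset.powersetCard 2).filter (fun p =>
            e ∉ p ∧ (∀ f ∈ p, ∃ v, v ∈ e ∧ v ∈ f) ∧
              (∀ f ∈ p, ∀ g ∈ p, f ≠ g → ∃ v, v ∈ f ∧ v ∈ g))).card : ℝ)) := by
  classical
  -- set up the endpoints of e
  induction e using Sym2.ind with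
  | _ u v =>
  rw [SimpleGraph.mem_edgeFinset, SimpleGraph.mem_edgeSet] at he
  have huv : u ≠ v := he.ne
  set e : Sym2 V := s(u, v) with he'
  set P : Finset (Finset (Sym2 V)) :=
    (G.edgeFinset.powersetCard 2).filter (fun p =>
      e ∉ p ∧ (∀ f ∈ p, ∃ v, v ∈ e ∧ v ∈ f) ∧
        (∀ f ∈ p, ∀ g ∈ p, f ≠ g → ∃ v, v ∈ f ∧ v ∈ g)) with hP
  set A : Finset (Sym2 V) := G.edgeFinset.filter (fun f => f ≠ e ∧ u ∈ f) with hA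
  set B : Finset (Sym2 V) := G.edgeFinset.filter (fun f => f ≠ e ∧ v ∈ f) with hB
  -- each member of a pair in P lies in A ∪ B
  have hmemAB : ∀ p ∈ P, ∀ f ∈ p, f ∈ A ∪ B := by
    intro p hp f hf
    rw [hP, mem_filter, Finset.mem_powersetCard] at hp
    obtain ⟨⟨hsub, _⟩, hne, hinc, _⟩ := hp
    obtain ⟨x, hxe, hxf⟩ := hinc f hf
    have hfe : f ≠ e := fun h => hne (h ▸ hf)
    rcases Sym2.mem_iff.mp hxe with rfl | rfl
    · exact Finset.mem_union_left _ (by simp [hA, hsub hf, hfe, hxf])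
    · exact Finset.mem_union_right _ (by simp [hB, hsub hf, hfe, hxf])
  -- cardinality bounds on A and B
  have hcardA : ∀ (w : V) (S : Finset (Sym2 V)),
      S = G.edgeFinset.filter (fun f => f ≠ e ∧ w ∈ f) → w ∈ e → S.card ≤ Δ - 1 := by
    intro w S hS hw
    have hins : insert e S ⊆ G.incidenceFinset w := by
      intro f hf
      rw [SimpleGraph.mem_incidenceFinset]
      rcases Finset.mem_insert.mp hf with rfl | hf
      · exact ⟨G.mem_edgeSet.mpr he, hw⟩
      · rw [hS, mem_filter, SimpleGraph.mem_edgeFinset] at hf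
        exact ⟨hf.1, hf.2.2⟩
    have heS : e ∉ S := by simp [hS]
    have := Finset.card_le_card hins
    rw [Finset.card_insert_of_notMem heS, SimpleGraph.card_incidenceFinset_eq_degree] at this
    have hd := hdeg w
    omega
  have hcA : A.card ≤ Δ - 1 := hcardA u A hA (by simp [he'])
  have hcB : B.card ≤ Δ - 1 := hcardA v B hB (by simp [he'])
  -- A and B are disjoint
  have hAB : ∀ f, f ∈ A → f ∉ B := by
    intro f hfA hfB
    rw [hA, mem_filter] at hfA
    rw [hB, mem_filter] at hfB
    exact hfA.2.1 ((Sym2.mem_and_mem_iff huv).mp ⟨hfA.2.2, hfB.2.2⟩)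
  -- the "crossing" pairs
  set C : Finset (Finset (Sym2 V)) := P.filter (fun p => ¬ p ⊆ A ∧ ¬ p ⊆ B) with hC
  -- structure of crossing pairs
  have hCstruct : ∀ p ∈ C, ∃ w, w ≠ u ∧ s(u, w) ∈ A ∧
      p = {s(u, w), s(v, w)} ∧ p ∩ A = {s(u, w)} := by
    intro p hp
    rw [hC, mem_filter] at hp
    obtain ⟨hpP, hnA, hnB⟩ := hp
    obtain ⟨f, hfp, hfA⟩ := Finset.not_subset.mp hnA
    obtain ⟨g, hgp, hgB⟩ := Finset.not_subset.mp hnB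
    have hfB : f ∈ B := by
      rcases Finset.mem_union.mp (hmemAB p hpP f hfp) with h | h
      · exact absurd h hfA
      · exact h
    have hgA : g ∈ A := by
      rcases Finset.mem_union.mp (hmemAB p hpP g hgp) with h | h
      · exact h
      · exact absurd h hgB
    have hfg : f ≠ g := fun h => hfA (h ▸ hgA)
    -- p = {f, g}
    have hp2 : p.card = 2 := by
      have := (mem_filter.mp hpP).1
      exact (Finset.mem_powersetCard.mp this).2
    have hpfg : p = {f, g} := by
      have hsub : ({f, g} : Finset (Sym2 V)) ⊆ p := by
        intro x hx; rcases Finset.mem_insert.mp hx with rfl | hx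
        · exact hfp
        · rwa [Finset.mem_singleton.mp hx]
      have : ({f, g} : Finset (Sym2 V)).card = 2 := Finset.card_pair hfg
      exact (Finset.eq_of_subset_of_card_le hsub (by omega)).symm
    -- g = s(u, w)
    rw [hA, mem_filter] at hgA
    obtain ⟨hgE, hge, hug⟩ := hgA
    obtain ⟨w, hw⟩ := Sym2.mem_iff_exists.mp hug
    have hgadj : G.Adj u w := by
      rw [← SimpleGraph.mem_edgeSet, ← hw]; exact SimpleGraph.mem_edgeFinset.mp hgE
    have hwu : w ≠ u := fun h => hgadj.ne (h ▸ rfl)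
    have hwv : w ≠ v := by
      rintro rfl; exact hge (hw.trans rfl)
    have hvg : v ∉ g := by
      rw [hw, Sym2.mem_iff]; push_neg; exact ⟨fun h => huv h.symm, fun h => hwv h.symm⟩
    -- f = s(v, w)
    rw [hB, mem_filter] at hfB
    obtain ⟨hfE, hfe, hvf⟩ := hfB
    obtain ⟨x, hx⟩ := Sym2.mem_iff_exists.mp hvf
    have hfadj : G.Adj v x := by
      rw [← SimpleGraph.mem_edgeSet, ← hx]; exact SimpleGraph.mem_edgeFinset.mp hfE
    have hxv : x ≠ v := hfadj.ne'
    have huf : u ∉ f := fun huf => hfA (by simp [hA, hfE, hfe, huf])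
    -- f and g share a vertex
    obtain ⟨y, hyf, hyg⟩ := (mem_filter.mp hpP).2.2.2 f hfp g hgp hfg
    have hyw : y = w := by
      rw [hw, Sym2.mem_iff] at hyg
      rcases hyg with h | h
      · exact absurd (h ▸ hyf) huf
      · exact h
    have hxw : x = w := by
      rw [hx, Sym2.mem_iff] at hyf
      rcases hyf with h | h
      · exact absurd (hyw.symm.trans h) hwv
      · exact (h.symm.trans hyw)
    have hfvw : f = s(v, w) := by rw [hx, hxw]
    refine ⟨w, hwu, by rw [← hw]; exact mem_filter.mpr ⟨hgE, hge, hug⟩, ?_, ?_⟩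
    · rw [hpfg, hfvw, hw, Finset.pair_comm]
    · ext z
      simp only [Finset.mem_inter, Finset.mem_singleton]
      constructor
      · rintro ⟨hz, hzA⟩
        rw [hpfg] at hz
        rcases Finset.mem_insert.mp hz with rfl | hz
        · exact absurd hzA hfA
        · exact (Finset.mem_singleton.mp hz).trans hw
      · rintro rfl
        rw [← hw]
        exact ⟨hgp, mem_filter.mpr ⟨hgE, hge, hug⟩⟩
  -- |C| ≤ |A|
  have hcC : C.card ≤ A.card := by
    have hinj : Set.InjOn (fun p => p ∩ A) C := by
      intro p hp q hq hpq
      obtain ⟨w, hwu, hwA, hpeq, hpA⟩ := hCstruct p hp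
      obtain ⟨w', hwu', hwA', hqeq, hqA⟩ := hCstruct q hq
      simp only at hpq
      rw [hpA, hqA] at hpq
      have : s(u, w) = s(u, w') := Finset.singleton_injective hpq
      rw [Sym2.eq_iff] at this
      have hww : w = w' := by
        rcases this with ⟨_, h⟩ | ⟨h1, h2⟩
        · exact h
        · exact absurd h2 hwu
      rw [hpeq, hqeq, hww]
    calc C.card = (C.image (fun p => p ∩ A)).card := (Finset.card_image_of_injOn hinj).symm
      _ ≤ (A.image (fun g => ({g} : Finset (Sym2 V)))).card := by
          apply Finset.card_le_card
          intro s hs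
          obtain ⟨p, hp, rfl⟩ := Finset.mem_image.mp hs
          obtain ⟨w, _, hwA, _, hpA⟩ := hCstruct p hp
          exact Finset.mem_image.mpr ⟨s(u, w), hwA, hpA.symm⟩
      _ ≤ A.card := Finset.card_image_le
  -- decompose P
  have hPsub : P ⊆ (A.powersetCard 2) ∪ (B.powersetCard 2) ∪ C := by
    intro p hp
    have hp2 : p.card = 2 :=
      (Finset.mem_powersetCard.mp (mem_filter.mp hp).1).2
    by_cases hpA : p ⊆ A
    · exact Finset.mem_union_left _ (Finset.mem_union_left _
        (Finset.mem_powersetCard.mpr ⟨hpA, hp2⟩))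
    by_cases hpB : p ⊆ B
    · exact Finset.mem_union_left _ (Finset.mem_union_right _
        (Finset.mem_powersetCard.mpr ⟨hpB, hp2⟩))
    · exact Finset.mem_union_right _ (Finset.mem_filter.mpr ⟨hp, hpA, hpB⟩)
  have hPcard : P.card ≤ (Δ - 1).choose 2 + (Δ - 1).choose 2 + (Δ - 1) := by
    calc P.card ≤ ((A.powersetCard 2) ∪ (B.powersetCard 2) ∪ C).card :=
          Finset.card_le_card hPsub
      _ ≤ ((A.powersetCard 2) ∪ (B.powersetCard 2)).card + C.card := Finset.card_union_le _ _
      _ ≤ (A.powersetCard 2).card + (B.powersetCard 2).card + C.card := by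
          exact Nat.add_le_add_right (Finset.card_union_le _ _) _
      _ ≤ (Δ - 1).choose 2 + (Δ - 1).choose 2 + (Δ - 1) := by
          rw [Finset.card_powersetCard, Finset.card_powersetCard]
          exact Nat.add_le_add (Nat.add_le_add (Nat.choose_le_choose 2 hcA)
            (Nat.choose_le_choose 2 hcB)) (hcC.trans hcA)
  -- pass to the reals
  have hΔR : (2 : ℝ) ≤ (Δ : ℝ) := by exact_mod_cast hΔ
  have hcast : ((Δ - 1 : ℕ) : ℝ) = (Δ : ℝ) - 1 := by
    rw [Nat.cast_sub (by omega)]; norm_num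
  have hm : (P.card : ℝ) ≤ ((Δ : ℝ) - 1) ^ 2 := by
    have h1 : (P.card : ℝ) ≤ ((Δ - 1).choose 2 : ℝ) + ((Δ - 1).choose 2 : ℝ) + ((Δ - 1 : ℕ) : ℝ) := by
      exact_mod_cast hPcard
    rw [Nat.cast_choose_two, hcast] at h1
    nlinarith [h1]
  have hpos : (0 : ℝ) < 2 * ((Δ : ℝ) - 1) := by linarith
  rw [one_div, inv_mul_eq_div, div_le_div_iff₀ (by norm_num) hpos]
  nlinarith [hm]
end

section
/- Let U be a finite set of size k, let 0 < δ < 1 and 0 < ν < 1, and let S_1, …, S_t be subsets of U of common size s satisfying the following property: for every T ⊆ U with |T| ≥ δk, at least (1−ν)·t indices i ∈ [t] satisfy |S_i ∩ T| ∈ [(1/2)·s·|T|/k, (3/2)·s·|T|/k]. Let T ⊆ ψ ⊆ U be sets with |T| ≥ |ψ|/2 and |T| ≥ δk. Then for at least (1−2ν)·t indices i ∈ [t], it holds that |S_i ∩ T| ≥ (1/6)·|S_i ∩ ψ|. -/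
open Finset

/-- Key intersection property of a `(1/2, δ, ν)`-representative family: if each large set
`T` (with `|T| ≥ δk`) has a usual-sized intersection `|S i ∩ T| ∈ [(1/2)·s·|T|/k, (3/2)·s·|T|/k]`
with at least `(1−ν)·t` of the sets `S i`, then for sets `T ⊆ ψ ⊆ U` with `|T| ≥ |ψ|/2`
and `|T| ≥ δk`, at least `(1−2ν)·t` indices `i` satisfy `|S i ∩ T| ≥ (1/6)·|S i ∩ ψ|`. -/
theorem representative_family_good_intersection
    {U : Type*} [Fintype U] [DecidableEq U]
    (δ ν : ℝ) (hδ0 : 0 < δ) (hδ1 : δ < 1) (hν0 : 0 < ν) (hν1 : ν < 1)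
    (t s : ℕ) (S : Fin t → Finset U) (hcard : ∀ i, (S i).card = s)
    (hrep : ∀ T : Finset U, δ * Fintype.card U ≤ (T.card : ℝ) →
      (1 - ν) * t ≤
        (((univ : Finset (Fin t)).filter (fun i =>
          ((S i ∩ T).card : ℝ) ∈
            Set.Icc ((1 / 2 : ℝ) * s * T.card / Fintype.card U)
              ((3 / 2 : ℝ) * s * T.card / Fintype.card U))).card : ℝ))
    (T ψ : Finset U) (hTψ : T ⊆ ψ)
    (hThalf : (ψ.card : ℝ) / 2 ≤ (T.card : ℝ))
    (hTlarge : δ * Fintype.card U ≤ (T.card : ℝ)) :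
    (1 - 2 * ν) * t ≤
      (((univ : Finset (Fin t)).filter (fun i =>
        (1 / 6 : ℝ) * ((S i ∩ ψ).card : ℝ) ≤ ((S i ∩ T).card : ℝ))).card : ℝ) := by
  classical
  have hψlarge : δ * Fintype.card U ≤ (ψ.card : ℝ) := by
    refine hTlarge.trans ?_
    exact_mod_cast Nat.cast_le.mpr (card_le_card hTψ)
  have hA := hrep T hTlarge
  have hB := hrep ψ hψlarge
  set A := (univ : Finset (Fin t)).filter (fun i =>
      ((S i ∩ T).card : ℝ) ∈
        Set.Icc ((1 / 2 : ℝ) * s * T.card / Fintype.card U)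
          ((3 / 2 : ℝ) * s * T.card / Fintype.card U)) with hAdef
  set B := (univ : Finset (Fin t)).filter (fun i =>
      ((S i ∩ ψ).card : ℝ) ∈
        Set.Icc ((1 / 2 : ℝ) * s * ψ.card / Fintype.card U)
          ((3 / 2 : ℝ) * s * ψ.card / Fintype.card U)) with hBdef
  set G := (univ : Finset (Fin t)).filter (fun i =>
      (1 / 6 : ℝ) * ((S i ∩ ψ).card : ℝ) ≤ ((S i ∩ T).card : ℝ)) with hGdef
  have hsub : A ∩ B ⊆ G := by
    intro i hi
    simp only [hAdef, hBdef, hGdef, mem_inter, mem_filter, mem_univ, true_and,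
      Set.mem_Icc] at hi ⊢
    obtain ⟨⟨hA1, _⟩, ⟨_, hB2⟩⟩ := hi
    have hk : (0 : ℝ) ≤ (Fintype.card U : ℝ) := Nat.cast_nonneg _
    have hs : (0 : ℝ) ≤ (s : ℝ) := Nat.cast_nonneg _
    have key : (1 / 2 : ℝ) * s * ψ.card / Fintype.card U / 2 ≤
        (1 / 2 : ℝ) * s * T.card / Fintype.card U := by
      rcases eq_or_lt_of_le hk with h | h
      · rw [← h]; simp
      · rw [div_div, div_le_div_iff₀ (by positivity) h]
        nlinarith [mul_nonneg (mul_nonneg hs hk) (by linarith : (0:ℝ) ≤ 2 * (T.card : ℝ) - (ψ.card : ℝ))]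
    calc (1 / 6 : ℝ) * ((S i ∩ ψ).card : ℝ)
        ≤ (1 / 6 : ℝ) * ((3 / 2 : ℝ) * s * ψ.card / Fintype.card U) := by linarith
      _ = (1 / 2 : ℝ) * s * ψ.card / Fintype.card U / 2 := by ring
      _ ≤ (1 / 2 : ℝ) * s * T.card / Fintype.card U := key
      _ ≤ ((S i ∩ T).card : ℝ) := hA1
  have hcardineq : (A.card : ℝ) + B.card - t ≤ ((A ∩ B).card : ℝ) := by
    have h1 : A.card + B.card = (A ∪ B).card + (A ∩ B).card :=
      (card_union_add_card_inter A B).symm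
    have h2 : (A ∪ B).card ≤ t := by
      simpa using card_le_card (A ∪ B).subset_univ
    have h2' : ((A ∪ B).card : ℝ) ≤ t := Nat.cast_le.mpr h2
    have h1' : (A.card : ℝ) + B.card = ((A ∪ B).card : ℝ) + (A ∩ B).card := by
      exact_mod_cast congrArg (Nat.cast (R := ℝ)) h1
    linarith
  have hmono : ((A ∩ B).card : ℝ) ≤ (G.card : ℝ) :=
    Nat.cast_le.mpr (card_le_card hsub)
  linarith
end
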